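/- arXiv:2302.14383 — 3 statements merged into one kernel-verified Lean document; each statement's English description precedes it below -/
import Mathlib

section
/- If a collection of vectors u_z indexed by z ∈ Z1 × ... × Zk is decomposable, then there exist unique vectors u_0 ∈ V and u_{z_i} ∈ V for all z_i ∈ Z_i, i = 1,...,k, such that Σ_{z_i ∈ Z_i} u_{z_i} = 0 for each i, and u_z = u_0 + u_{z_1} + ... + u_{z_k} for all z. -/
theorem stmt2 {k : ℕ} {Z : Fin k → Type} [∀ i, Fintype (Z i)] [∀ i, Nonempty (Z i)]
    {V : Type} [AddCommGroup V] [Module ℝ V] (u : (∀ i, Z i) → V)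
    (h : ∃ w : ∀ i, Z i → V, ∀ z, u z = ∑ i, w i (z i)) :
    ∃! p : V × (∀ i, Z i → V),
      (∀ i, ∑ t : Z i, p.2 i t = 0) ∧ ∀ z, u z = p.1 + ∑ i, p.2 i (z i) := by
  classical
  obtain ⟨w, hw⟩ := h
  -- uniqueness key lemma
  have key : ∀ (c c' : V) (r r' : ∀ i, Z i → V),
      (∀ i, ∑ t, r i t = 0) → (∀ z, u z = c + ∑ i, r i (z i)) →
      (∀ i, ∑ t, r' i t = 0) → (∀ z, u z = c' + ∑ i, r' i (z i)) →
      c = c' ∧ r = r' := by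
    intro c c' r r' h1 h2 h1' h2'
    have z0 : ∀ i, Z i := fun i => Classical.arbitrary _
    have E : ∀ z : ∀ i, Z i, c + ∑ i, r i (z i) = c' + ∑ i, r' i (z i) :=
      fun z => (h2 z).symm.trans (h2' z)
    have hd : ∀ i t, r i t - r i (z0 i) = r' i t - r' i (z0 i) := by
      intro i t
      have split : ∀ (s : ∀ i, Z i → V), ∑ j, s j (Function.update z0 i t j)
          = s i t + ∑ j ∈ Finset.univ.erase i, s j (z0 j) := by
        intro s
        rw [← Finset.add_sum_erase _ _ (Finset.mem_univ i)]
        congr 1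
        · simp
        · exact Finset.sum_congr rfl fun j hj => by
            rw [Function.update_of_ne (Finset.ne_of_mem_erase hj)]
      have split0 : ∀ (s : ∀ i, Z i → V), ∑ j, s j (z0 j)
          = s i (z0 i) + ∑ j ∈ Finset.univ.erase i, s j (z0 j) :=
        fun s => (Finset.add_sum_erase _ _ (Finset.mem_univ i)).symm
      have e1 := E (Function.update z0 i t)
      have e2 := E z0
      rw [split r, split r'] at e1
      rw [split0 r, split0 r'] at e2
      calc r i t - r i (z0 i)
          = (c + (r i t + ∑ j ∈ Finset.univ.erase i, r j (z0 j)))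
            - (c + (r i (z0 i) + ∑ j ∈ Finset.univ.erase i, r j (z0 j))) := by abel
        _ = (c' + (r' i t + ∑ j ∈ Finset.univ.erase i, r' j (z0 j)))
            - (c' + (r' i (z0 i) + ∑ j ∈ Finset.univ.erase i, r' j (z0 j))) := by
              rw [e1, e2]
        _ = r' i t - r' i (z0 i) := by abel
    have hD : ∀ i, r i (z0 i) - r' i (z0 i) = 0 := by
      intro i
      have hconst : ∀ t : Z i, r i t - r' i t = r i (z0 i) - r' i (z0 i) := by
        intro t
        have := hd i t
        rw [sub_eq_sub_iff_sub_eq_sub] at this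
        exact this
      have hsum : ∑ t : Z i, (r i t - r' i t)
          = (Fintype.card (Z i)) • (r i (z0 i) - r' i (z0 i)) := by
        rw [Finset.sum_congr rfl fun t _ => hconst t, Finset.sum_const, Finset.card_univ]
      rw [Finset.sum_sub_distrib, h1 i, h1' i, sub_zero] at hsum
      have : ((Fintype.card (Z i) : ℝ)) • (r i (z0 i) - r' i (z0 i)) = 0 := by
        rw [Nat.cast_smul_eq_nsmul, ← hsum]
      rcases smul_eq_zero.mp this with hc | hv
      · exact absurd hc (by exact_mod_cast Fintype.card_pos.ne')
      · exact hv
    have hr : r = r' := by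
      funext i t
      have h1 := hd i t
      have h2 := hD i
      have : r i t - r' i t = r i (z0 i) - r' i (z0 i) := by
        rw [sub_eq_sub_iff_sub_eq_sub] at h1; exact h1
      rw [h2] at this
      exact sub_eq_zero.mp this
    refine ⟨?_, hr⟩
    have := E z0
    rw [hr] at this
    exact add_right_cancel this
  -- existence
  let a : Fin k → V := fun i => ((Fintype.card (Z i) : ℝ))⁻¹ • ∑ t, w i t
  let q : ∀ i, Z i → V := fun i t => w i t - a i
  have hcard : ∀ i, ((Fintype.card (Z i) : ℝ)) ≠ 0 :=
    fun i => by exact_mod_cast Fintype.card_pos.ne'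
  have hq0 : ∀ i, ∑ t : Z i, q i t = 0 := by
    intro i
    simp only [q, Finset.sum_sub_distrib, Finset.sum_const, Finset.card_univ]
    rw [← Nat.cast_smul_eq_nsmul ℝ]
    simp only [a]
    rw [smul_smul, mul_inv_cancel₀ (hcard i), one_smul, sub_self]
  have hqu : ∀ z, u z = (∑ i, a i) + ∑ i, q i (z i) := by
    intro z
    rw [hw z]
    simp only [q, Finset.sum_sub_distrib]
    abel
  refine ⟨⟨∑ i, a i, q⟩, ⟨hq0, hqu⟩, ?_⟩
  rintro ⟨c, r⟩ ⟨h1, h2⟩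
  obtain ⟨hc, hr⟩ := key c (∑ i, a i) r q h1 h2 hq0 hqu
  exact Prod.ext hc hr
end

section
/- Suppose u : Z1 × Z2 → ℝ^d is such that for every w ∈ ℝ^d and all z_1, z'_1 ∈ Z1, z_2, z'_2 ∈ Z2: ⟨u_{(z'_1,z_2)} − u_{(z_1,z_2)}, w⟩ ≥ 0 ⟺ ⟨u_{(z'_1,z'_2)} − u_{(z_1,z'_2)}, w⟩ ≥ 0, and ⟨u_{(z_1,z'_2)} − u_{(z_1,z_2)}, w⟩ ≥ 0 ⟺ ⟨u_{(z'_1,z'_2)} − u_{(z'_1,z_2)}, w⟩ ≥ 0. Then for each such quadruple, the four vectors u_{(z_1,z_2)}, u_{(z'_1,z_2)}, u_{(z_1,z'_2)}, u_{(z'_1,z'_2)} either lie on a common affine line, or satisfy u_{(z'_1,z'_2)} − u_{(z_1,z'_2)} = u_{(z'_1,z_2)} − u_{(z_1,z_2)}. -/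
lemma key_same_halfspaces {d : ℕ} (a b : EuclideanSpace ℝ (Fin d))
    (h : ∀ w : EuclideanSpace ℝ (Fin d), 0 ≤ (inner ℝ a w : ℝ) ↔ 0 ≤ (inner ℝ b w : ℝ)) :
    (a = 0 ∧ b = 0) ∨ ∃ s : ℝ, 0 < s ∧ b = s • a := by
  by_cases ha : a = 0
  · left
    refine ⟨ha, ?_⟩
    have hb := (h (-b)).mp (by simp [ha])
    rw [inner_neg_right] at hb
    have hb' : (inner ℝ b b : ℝ) ≤ 0 := by linarith
    exact real_inner_self_nonpos.mp hb'
  · right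
    have hna : (0:ℝ) < ‖a‖^2 := by
      have : 0 < ‖a‖ := norm_pos_iff.mpr ha
      positivity
    set t : ℝ := (inner ℝ a b : ℝ) / ‖a‖^2 with htdef
    have horth : (inner ℝ a (b - t • a) : ℝ) = 0 := by
      rw [inner_sub_right, real_inner_smul_right, real_inner_self_eq_norm_sq, htdef,
        div_mul_cancel₀ _ (ne_of_gt hna), sub_self]
    have hperp : b - t • a = 0 := by
      have h1' := (h (-(b - t • a))).mp (by rw [inner_neg_right, horth]; simp)
      rw [inner_neg_right] at h1'
      have hb : (inner ℝ b (b - t • a) : ℝ) = ‖b - t • a‖^2 := by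
        have e : (inner ℝ (b - t • a) (b - t • a) : ℝ)
            = (inner ℝ b (b - t • a) : ℝ) - t * (inner ℝ a (b - t • a) : ℝ) := by
          rw [inner_sub_left, real_inner_smul_left]
        rw [real_inner_self_eq_norm_sq, horth] at e
        linarith
      have hle : ‖b - t • a‖^2 ≤ 0 := by rw [← hb]; linarith
      have : ‖b - t • a‖ = 0 := by nlinarith [norm_nonneg (b - t • a)]
      exact norm_eq_zero.mp this
    have hba : b = t • a := by
      have := sub_eq_zero.mp hperp
      exact this
    have hneg : ¬ (0 ≤ (inner ℝ a (-a) : ℝ)) := by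
      rw [inner_neg_right, real_inner_self_eq_norm_sq]
      push_neg
      linarith
    have hneg2 : ¬ (0 ≤ (inner ℝ b (-a) : ℝ)) := fun hh => hneg ((h (-a)).mpr hh)
    rw [hba, inner_neg_right, real_inner_smul_left, real_inner_self_eq_norm_sq] at hneg2
    push_neg at hneg2
    have ht : 0 < t := by nlinarith
    exact ⟨t, ht, hba⟩

theorem stmt10 {d : ℕ} {Z1 Z2 : Type} [Fintype Z1] [Fintype Z2] [Nonempty Z1] [Nonempty Z2]
    (u : Z1 × Z2 → EuclideanSpace ℝ (Fin d))
    (h1 : ∀ (w : EuclideanSpace ℝ (Fin d)) (z1 z1' : Z1) (z2 z2' : Z2),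
      (0 ≤ (inner ℝ (u (z1', z2) - u (z1, z2)) w : ℝ) ↔
        0 ≤ (inner ℝ (u (z1', z2') - u (z1, z2')) w : ℝ)))
    (h2 : ∀ (w : EuclideanSpace ℝ (Fin d)) (z1 z1' : Z1) (z2 z2' : Z2),
      (0 ≤ (inner ℝ (u (z1, z2') - u (z1, z2)) w : ℝ) ↔
        0 ≤ (inner ℝ (u (z1', z2') - u (z1', z2)) w : ℝ))) :
    ∀ (z1 z1' : Z1) (z2 z2' : Z2),
      (∃ a b : EuclideanSpace ℝ (Fin d),
        ∀ x ∈ ({u (z1, z2), u (z1', z2), u (z1, z2'), u (z1', z2')} :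
            Set (EuclideanSpace ℝ (Fin d))), ∃ t : ℝ, x = a + t • b) ∨
      u (z1', z2') - u (z1, z2') = u (z1', z2) - u (z1, z2) := by
  intro z1 z1' z2 z2'
  set P := u (z1, z2) with hP
  set Q := u (z1', z2) with hQ
  set R := u (z1, z2') with hR
  set S := u (z1', z2') with hS
  have hA := key_same_halfspaces (Q - P) (S - R) (fun w => h1 w z1 z1' z2 z2')
  have hC := key_same_halfspaces (R - P) (S - Q) (fun w => h2 w z1 z1' z2 z2')
  rcases hA with ⟨hA0, hB0⟩ | ⟨s, hs, hB⟩
  · right; rw [hB0, hA0]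
  rcases hC with ⟨hC0, hD0⟩ | ⟨t, ht, hD⟩
  · right
    rw [sub_eq_zero.mp hC0, sub_eq_zero.mp hD0]
  by_cases hs1 : s = 1
  · right; rw [hB, hs1, one_smul]
  by_cases ht1 : t = 1
  · right
    have hDC : S - Q = R - P := by rw [hD, ht1, one_smul]
    rw [sub_eq_sub_iff_add_eq_add] at hDC ⊢
    rw [hDC, add_comm]
  · left
    have e : (1 - s) • (Q - P) = (1 - t) • (R - P) := by
      rw [sub_smul, sub_smul, one_smul, one_smul, ← hB, ← hD]
      abel
    have ht1' : (1:ℝ) - t ≠ 0 := fun h => ht1 (by linarith)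
    have hC' : R - P = ((1 - s) / (1 - t)) • (Q - P) := by
      rw [div_eq_mul_inv, mul_comm, ← smul_smul, e, smul_smul,
        inv_mul_cancel₀ ht1', one_smul]
    refine ⟨P, Q - P, ?_⟩
    intro x hx
    simp only [Set.mem_insert_iff, Set.mem_singleton_iff] at hx
    rcases hx with hx | hx | hx | hx
    · exact ⟨0, by rw [hx]; module⟩
    · exact ⟨1, by rw [hx]; module⟩
    · refine ⟨(1 - s) / (1 - t), ?_⟩
      rw [hx, ← hC']
      module
    · refine ⟨1 + t * ((1 - s) / (1 - t)), ?_⟩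
      have hSx : x = Q + t • (R - P) := by
        rw [hx, ← hD]; abel
      rw [hSx, hC', smul_smul, add_smul, one_smul]
      module
end

section
/- Let G = S_{n_1} × ... × S_{n_k} act linearly on a finite-dimensional real vector space V via a representation ρ, where G also acts on Z = Z1 × ... × Zk coordinate-wise (identifying Z_i with {1,...,n_i}). If r : Z → V is G-equivariant (r(g·z) = ρ(g) r(z)) and the action on V is disentangled, meaning V decomposes as a direct sum V = V_0 ⊕ V_1 ⊕ ... ⊕ V_k where each factor S_{n_i} acts trivially on V_j for j ≠ i and on V_0, then the vectors {r(z) : z ∈ Z} are decomposable: r(z) = u_0 + u_{z_1} + ... + u_{z_k} for suitable vectors u_0 and u_{z_i} depending only on z_i. -/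
open DirectSum

theorem stmt12 {k : ℕ} {Z : Fin k → Type} [∀ i, Fintype (Z i)] [∀ i, Nonempty (Z i)]
    {V : Type} [AddCommGroup V] [Module ℝ V] [FiniteDimensional ℝ V]
    (ρ : (∀ i, Equiv.Perm (Z i)) →* (V ≃ₗ[ℝ] V))
    (r : (∀ i, Z i) → V)
    (hequiv : ∀ (g : ∀ i, Equiv.Perm (Z i)) (z : ∀ i, Z i),
      r (fun i => g i (z i)) = ρ g (r z))
    (W : Option (Fin k) → Submodule ℝ V)
    (hInternal : DirectSum.IsInternal W)
    (hinv : ∀ (g : ∀ i, Equiv.Perm (Z i)) (j : Option (Fin k)), ∀ v ∈ W j, ρ g v ∈ W j)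
    (htriv0 : ∀ (g : ∀ i, Equiv.Perm (Z i)), ∀ v ∈ W none, ρ g v = v)
    (htriv : ∀ (g : ∀ i, Equiv.Perm (Z i)) (i : Fin k), g i = 1 →
      ∀ v ∈ W (some i), ρ g v = v) :
    ∃ (u0 : V) (w : ∀ i, Z i → V), ∀ z : ∀ i, Z i, r z = u0 + ∑ i, w i (z i) := by
  classical
  set E := LinearEquiv.ofBijective (DirectSum.coeLinearMap W) hInternal with hE
  -- projection
  set P : Option (Fin k) → V → V := fun j v => (E.symm v j : V) with hP
  -- decomposition: v = ∑ j, P j v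
  have hsum : ∀ v : V, v = P none v + ∑ i, P (some i) v := by
    intro v
    have h1 : DirectSum.coeLinearMap W (E.symm v) = v := E.apply_symm_apply v
    have h2 : (∑ j : Option (Fin k), DirectSum.of (fun j => W j) j (E.symm v j)) = E.symm v :=
      DirectSum.sum_univ_of _
    calc v = DirectSum.coeLinearMap W (E.symm v) := h1.symm
      _ = ∑ j : Option (Fin k), DirectSum.coeLinearMap W
            (DirectSum.of (fun j => W j) j (E.symm v j)) := by
          rw [← map_sum, h2]
      _ = ∑ j : Option (Fin k), P j v := by
          simp [DirectSum.coeLinearMap_of, hP]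
      _ = P none v + ∑ i, P (some i) v := by
          rw [Fintype.sum_option]
  -- commuting
  have hcomm : ∀ (g : ∀ i, Equiv.Perm (Z i)) (j : Option (Fin k)) (v : V),
      P j (ρ g v) = ρ g (P j v) := by
    intro g j v
    set L : ∀ j : Option (Fin k), W j →ₗ[ℝ] W j :=
      fun j => ((ρ g : V ≃ₗ[ℝ] V) : V →ₗ[ℝ] V).restrict (fun x hx => hinv g j x hx) with hL
    set φ : (⨁ j, W j) →ₗ[ℝ] (⨁ j, W j) := DFinsupp.mapRange.linearMap L with hφ
    have key : (DirectSum.coeLinearMap W).comp φ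
        = (((ρ g : V ≃ₗ[ℝ] V) : V →ₗ[ℝ] V)).comp (DirectSum.coeLinearMap W) := by
      refine DirectSum.linearMap_ext ℝ fun j' => ?_
      ext x
      have h5 : φ (DirectSum.of (fun j => (W j : Type)) j' x)
          = DirectSum.of (fun j => (W j : Type)) j' (L j' x) := by
        exact DFinsupp.mapRange_single (hf := fun i => (L i).map_zero)
      simp only [hφ] at h5
      simp only [hL] at h5
      simp [hφ, DirectSum.lof_eq_of, h5, DirectSum.coeLinearMap_of, hL,
        LinearMap.restrict_apply]
    have h3 : E.symm (ρ g v) = φ (E.symm v) := by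
      apply E.injective
      have : E (φ (E.symm v)) = DirectSum.coeLinearMap W (φ (E.symm v)) := rfl
      rw [E.apply_symm_apply, this]
      have h6 := LinearMap.congr_fun key (E.symm v)
      simp only [LinearMap.comp_apply] at h6
      rw [h6]
      have h1 : DirectSum.coeLinearMap W (E.symm v) = v := E.apply_symm_apply v
      rw [h1]
      rfl
    have h7 : E.symm ((ρ g) v) j = L j (E.symm v j) := by
      rw [h3]
      exact DFinsupp.mapRange_apply (fun i x => L i x) (fun i => (L i).map_zero) (E.symm v) j
    simp only [hP, h7, hL]
    simp [LinearMap.restrict_apply]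
  obtain ⟨z₀⟩ : Nonempty (∀ i, Z i) := ⟨fun i => Classical.arbitrary _⟩
  refine ⟨P none (r z₀), fun i t => P (some i) (r (Function.update z₀ i t)), fun z => ?_⟩
  have hz := hsum (r z)
  rw [hz]
  congr 1
  · -- P none (r z) = P none (r z₀)
    set g : ∀ i, Equiv.Perm (Z i) := fun i => Equiv.swap (z i) (z₀ i) with hg
    have h4 : r z₀ = ρ g (r z) := by
      rw [← hequiv g z]
      congr 1
      funext i
      simp [hg, Equiv.swap_apply_left]
    rw [h4, hcomm]
    exact (htriv0 g _ (E.symm (r z) none).2).symm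
  · apply Finset.sum_congr rfl
    intro i _
    set z' : ∀ j, Z j := Function.update z₀ i (z i) with hz'
    set g : ∀ j, Equiv.Perm (Z j) := fun j => Equiv.swap (z j) (z' j) with hg
    have h4 : r z' = ρ g (r z) := by
      rw [← hequiv g z]
      congr 1
      funext j
      simp [hg, Equiv.swap_apply_left]
    have hgi : g i = 1 := by
      simp [hg, hz', Function.update_self, Equiv.swap_self]
      rfl
    show P (some i) (r z) = P (some i) (r z')
    rw [h4, hcomm]
    exact (htriv g i hgi _ (E.symm (r z) (some i)).2).symm
end
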